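/- arXiv:1704.06481 — 2 statements merged into one kernel-verified Lean document; each statement's English description precedes it below -/
import Mathlib

section
/- Let m and m_η (η in a directed set Λ) be countably additive X-valued vector measures with L¹(m) ⊆ L¹(m_η) for all η. If for each f ∈ L¹(m) one has lim_η sup_{A ∈ Σ} ‖∫ f h_A dm − ∫ f h_A dm_η‖ = 0, then lim_η ‖f‖_{L¹(m_η)} = ‖f‖_{L¹(m)} for every f ∈ L¹(m). -/
open MeasureTheory Filter

noncomputable def scal {Ω : Type*} [MeasurableSpace Ω] {X : Type*} [NormedAddCommGroup X]
    [NormedSpace ℝ X] (m : VectorMeasure Ω X) (x : X →L[ℝ] ℝ) : SignedMeasure Ω :=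
  m.mapRange x.toLinearMap.toAddMonoidHom x.continuous

noncomputable def sint {Ω : Type*} [MeasurableSpace Ω] (s : SignedMeasure Ω) (f : Ω → ℝ) : ℝ :=
  ∫ ω, f ω ∂s.toJordanDecomposition.posPart - ∫ ω, f ω ∂s.toJordanDecomposition.negPart

open Classical in
noncomputable def hS {Ω : Type*} (A : Set Ω) : Ω → ℝ := fun ω => if ω ∈ A then (1 : ℝ) else -1

/-- The scalar part of `m`-integrability: integrable w.r.t. every scalarization. -/
def MemL1 {Ω : Type*} [MeasurableSpace Ω] {X : Type*} [NormedAddCommGroup X]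
    [NormedSpace ℝ X] (m : VectorMeasure Ω X) (f : Ω → ℝ) : Prop :=
  ∀ x : X →L[ℝ] ℝ, Integrable f (scal m x).totalVariation

noncomputable def l1norm {Ω : Type*} [MeasurableSpace Ω] {X : Type*} [NormedAddCommGroup X]
    [NormedSpace ℝ X] (m : VectorMeasure Ω X) (f : Ω → ℝ) : ℝ :=
  ⨆ x : {x : X →L[ℝ] ℝ // ‖x‖ ≤ 1}, ∫ ω, |f ω| ∂(scal m x.1).totalVariation

/-!
For a scalarization `μ = x ∘ m` with Hahn set `t`, `|∫ f h_A dμ| ≤ ∫ |f| d|μ|` for every `A`, with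
equality for `A = {f < 0}` on `t` and `A = {f ≥ 0}` off `t`. So `∫ |f| d|x ∘ m|` is the maximum
over `A` of `x (∫ f h_A dm)`, and `‖f‖_{L¹(m)}` is the supremum of these maxima over the unit ball
of `X*`; two such suprema differ by at most `sup_A ‖∫ f h_A dm − ∫ f h_A dm_η‖`. All these
suprema are finite by the uniform boundedness principle, as each `x (∫ f h_A dm)` is bounded in `A`.
-/

section SignFunction

variable {Ω : Type*}

lemma abs_hS (A : Set Ω) (ω : Ω) : |hS A ω| = 1 := by
  unfold hS; split <;> norm_num

lemma hS_compl (A : Set Ω) : hS Aᶜ = -hS A := by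
  funext ω; unfold hS; by_cases h : ω ∈ A <;> simp [h]

lemma mul_hS_eq_abs {A : Set Ω} {ω : Ω} {a : ℝ} (h : ω ∈ A ↔ 0 ≤ a) : a * hS A ω = |a| := by
  unfold hS
  by_cases ha : 0 ≤ a
  · rw [if_pos (h.2 ha), mul_one, abs_of_nonneg ha]
  · rw [if_neg (mt h.1 ha), abs_of_neg (not_le.1 ha), mul_neg_one]

variable [MeasurableSpace Ω]

lemma abs_integral_mul_hS_le (μ : Measure Ω) (f : Ω → ℝ) (A : Set Ω) :
    |∫ ω, f ω * hS A ω ∂μ| ≤ ∫ ω, |f ω| ∂μ := by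
  simpa only [abs_mul, abs_hS, mul_one] using
    abs_integral_le_integral_abs (f := fun ω => f ω * hS A ω)

lemma integral_mul_hS_of_ae_iff {μ : Measure Ω} {f : Ω → ℝ} {A : Set Ω}
    (h : ∀ᵐ ω ∂μ, ω ∈ A ↔ 0 ≤ f ω) : ∫ ω, f ω * hS A ω ∂μ = ∫ ω, |f ω| ∂μ :=
  integral_congr_ae (h.mono fun _ => mul_hS_eq_abs)

end SignFunction

section SignedMeasure

variable {Ω : Type*} [MeasurableSpace Ω] {s : SignedMeasure Ω} {f : Ω → ℝ}

lemma integral_abs_totalVariation (hf : Integrable f s.totalVariation) :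
    ∫ ω, |f ω| ∂s.totalVariation =
      ∫ ω, |f ω| ∂s.toJordanDecomposition.posPart + ∫ ω, |f ω| ∂s.toJordanDecomposition.negPart :=
  integral_add_measure (hf.abs.mono_measure (Measure.le_add_right le_rfl))
    (hf.abs.mono_measure (Measure.le_add_left le_rfl))

lemma abs_sint_mul_hS_le (hf : Integrable f s.totalVariation) (A : Set Ω) :
    |sint s (fun ω => f ω * hS A ω)| ≤ ∫ ω, |f ω| ∂s.totalVariation := by
  rw [integral_abs_totalVariation hf, sint]
  exact (abs_sub _ _).trans
    (add_le_add (abs_integral_mul_hS_le _ f A) (abs_integral_mul_hS_le _ f A))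

lemma exists_sint_mul_hS_eq (hf : Integrable f s.totalVariation) :
    ∃ A, MeasurableSet A ∧ sint s (fun ω => f ω * hS A ω) = ∫ ω, |f ω| ∂s.totalVariation := by
  set P := s.toJordanDecomposition.posPart
  set N := s.toJordanDecomposition.negPart
  obtain ⟨t, ht, hPt, hNt⟩ := s.toJordanDecomposition.mutuallySingular
  obtain ⟨g, hg, hfg⟩ := hf.1
  set A := t.ite {ω | g ω < 0} {ω | 0 ≤ g ω}
  have hA : MeasurableSet A := ht.ite (measurableSet_lt hg.measurable measurable_const)
    (measurableSet_le measurable_const hg.measurable)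
  have hP : ∫ ω, f ω * hS A ω ∂P = ∫ ω, |f ω| ∂P := by
    refine integral_mul_hS_of_ae_iff ?_
    filter_upwards [ae_mono (Measure.le_add_right le_rfl) hfg,
      measure_eq_zero_iff_ae_notMem.1 hPt] with ω hω hωt
    simp [A, Set.ite, hωt, hω]
  have hN : ∫ ω, f ω * hS Aᶜ ω ∂N = ∫ ω, |f ω| ∂N := by
    refine integral_mul_hS_of_ae_iff ?_
    filter_upwards [ae_mono (Measure.le_add_left le_rfl) hfg,
      measure_eq_zero_iff_ae_notMem.1 hNt] with ω hω hωt
    simp only [Set.mem_compl_iff, not_not] at hωt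
    simp [A, Set.ite, hωt, hω]
  simp only [hS_compl, Pi.neg_apply, mul_neg, integral_neg] at hN
  refine ⟨A, hA, ?_⟩
  rw [sint, integral_abs_totalVariation hf, hP]
  linarith

end SignedMeasure

section DualSupremum

variable {X : Type*} [NormedAddCommGroup X] [NormedSpace ℝ X] {α : Type*}

lemma exists_norm_le_of_forall_abs_dual_le (v : α → X)
    (h : ∀ x : X →L[ℝ] ℝ, ∃ C, ∀ a, |x (v a)| ≤ C) : ∃ C, ∀ a, ‖v a‖ ≤ C := by
  obtain ⟨C, hC⟩ :=
    banach_steinhaus (g := fun a => NormedSpace.inclusionInDoubleDual ℝ X (v a))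
      fun x => by simpa [Real.norm_eq_abs] using h x
  exact ⟨C, fun a => (NormedSpace.inclusionInDoubleDualLi ℝ).norm_map (v a) ▸ hC a⟩

lemma apply_le_norm_of_norm_le_one {x : X →L[ℝ] ℝ} (hx : ‖x‖ ≤ 1) (v : X) : x v ≤ ‖v‖ :=
  (le_abs_self _).trans ((x.le_of_opNorm_le hx v).trans_eq (one_mul _))

instance : Nonempty {x : X →L[ℝ] ℝ // ‖x‖ ≤ 1} := ⟨⟨0, by simp⟩⟩

def IsDualMaxOf (v : α → X) (p : (X →L[ℝ] ℝ) → ℝ) : Prop :=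
  ∀ x, (∀ a, |x (v a)| ≤ p x) ∧ ∃ a, x (v a) = p x

lemma IsDualMaxOf.exists_norm_le {v : α → X} {p : (X →L[ℝ] ℝ) → ℝ} (hp : IsDualMaxOf v p) :
    ∃ C, ∀ a, ‖v a‖ ≤ C :=
  exists_norm_le_of_forall_abs_dual_le v fun x => ⟨p x, (hp x).1⟩

lemma IsDualMaxOf.bddAbove {v : α → X} {p : (X →L[ℝ] ℝ) → ℝ} (hp : IsDualMaxOf v p) :
    BddAbove (Set.range fun x : {x : X →L[ℝ] ℝ // ‖x‖ ≤ 1} => p x.1) := by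
  obtain ⟨C, hC⟩ := hp.exists_norm_le
  refine ⟨C, ?_⟩
  rintro _ ⟨⟨x, hx⟩, rfl⟩
  obtain ⟨a, ha⟩ := (hp x).2
  show p x ≤ C
  exact ha ▸ (apply_le_norm_of_norm_le_one hx _).trans (hC a)

lemma bddAbove_range_norm_sub {v w : α → X} {p q : (X →L[ℝ] ℝ) → ℝ}
    (hp : IsDualMaxOf v p) (hq : IsDualMaxOf w q) :
    BddAbove (Set.range fun a => ‖v a - w a‖) := by
  obtain ⟨C, hC⟩ := hp.exists_norm_le
  obtain ⟨D, hD⟩ := hq.exists_norm_le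
  refine ⟨C + D, ?_⟩
  rintro _ ⟨a, rfl⟩
  exact (norm_sub_le _ _).trans (add_le_add (hC a) (hD a))

lemma IsDualMaxOf.iSup_le_iSup_add {v w : α → X} {p q : (X →L[ℝ] ℝ) → ℝ}
    (hp : IsDualMaxOf v p) (hq : IsDualMaxOf w q) :
    ⨆ x : {x : X →L[ℝ] ℝ // ‖x‖ ≤ 1}, p x.1 ≤
      (⨆ x : {x : X →L[ℝ] ℝ // ‖x‖ ≤ 1}, q x.1) + ⨆ a, ‖v a - w a‖ := by
  refine ciSup_le fun ⟨x, hx⟩ => ?_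
  obtain ⟨a, ha⟩ := (hp x).2
  calc p x = x (w a) + x (v a - w a) := by rw [map_sub, ← ha]; ring
    _ ≤ q x + ‖v a - w a‖ :=
      add_le_add ((le_abs_self _).trans ((hq x).1 a)) (apply_le_norm_of_norm_le_one hx _)
    _ ≤ _ := add_le_add (le_ciSup hq.bddAbove ⟨x, hx⟩)
      (le_ciSup (bddAbove_range_norm_sub hp hq) a)

lemma IsDualMaxOf.abs_iSup_sub_iSup_le {v w : α → X} {p q : (X →L[ℝ] ℝ) → ℝ}
    (hp : IsDualMaxOf v p) (hq : IsDualMaxOf w q) :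
    |(⨆ x : {x : X →L[ℝ] ℝ // ‖x‖ ≤ 1}, q x.1) - ⨆ x : {x : X →L[ℝ] ℝ // ‖x‖ ≤ 1}, p x.1| ≤
      ⨆ a, ‖v a - w a‖ := by
  have hpq := hp.iSup_le_iSup_add hq
  have hqp := hq.iSup_le_iSup_add hp
  simp only [norm_sub_rev (w _)] at hqp
  rw [abs_sub_le_iff]
  constructor <;> linarith

end DualSupremum

lemma isDualMaxOf_integral_mul_hS {Ω X : Type*} [MeasurableSpace Ω] [NormedAddCommGroup X]
    [NormedSpace ℝ X] {m : VectorMeasure Ω X} {f : Ω → ℝ} (hf : MemL1 m f) {I : Set Ω → X}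
    (hI : ∀ A : Set Ω, MeasurableSet A → ∀ x : X →L[ℝ] ℝ,
      x (I A) = sint (scal m x) (fun ω => f ω * hS A ω)) :
    IsDualMaxOf (fun A : {A : Set Ω // MeasurableSet A} => I A.1)
      (fun x => ∫ ω, |f ω| ∂(scal m x).totalVariation) := fun x =>
  ⟨fun A => hI A.1 A.2 x ▸ abs_sint_mul_hS_le (hf x) A.1,
    let ⟨A, hA, hAeq⟩ := exists_sint_mul_hS_eq (hf x); ⟨⟨A, hA⟩, (hI A hA x).trans hAeq⟩⟩

theorem stmt4_general {Ω X : Type*} [MeasurableSpace Ω] [NormedAddCommGroup X] [NormedSpace ℝ X]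
    {Λ : Type*} [SemilatticeSup Λ]
    (m : VectorMeasure Ω X) (mη : Λ → VectorMeasure Ω X)
    -- `L¹(m) ⊆ L¹(m_η)` for each `η`:
    (hincl : ∀ g : Ω → ℝ, MemL1 m g → ∀ η : Λ, MemL1 (mη η) g)
    (f : Ω → ℝ) (hf : MemL1 m f)
    -- `I A = ∫ f h_A dm`, `J η A = ∫ f h_A dm_η`:
    (I : Set Ω → X) (J : Λ → Set Ω → X)
    (hI : ∀ A : Set Ω, MeasurableSet A → ∀ x : X →L[ℝ] ℝ,
      x (I A) = sint (scal m x) (fun ω => f ω * hS A ω))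
    (hJ : ∀ η : Λ, ∀ A : Set Ω, MeasurableSet A → ∀ x : X →L[ℝ] ℝ,
      x (J η A) = sint (scal (mη η) x) (fun ω => f ω * hS A ω))
    -- hypothesis (i):
    (hlim : Tendsto (fun η : Λ => ⨆ A : {A : Set Ω // MeasurableSet A}, ‖I A.1 - J η A.1‖)
      atTop (nhds 0)) :
    Tendsto (fun η : Λ => l1norm (mη η) f) atTop (nhds (l1norm m f)) := by
  have hdist : ∀ η, |l1norm (mη η) f - l1norm m f| ≤
      ⨆ A : {A : Set Ω // MeasurableSet A}, ‖I A.1 - J η A.1‖ := fun η =>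
    (isDualMaxOf_integral_mul_hS hf hI).abs_iSup_sub_iSup_le
      (isDualMaxOf_integral_mul_hS (hincl f hf η) (hJ η))
  rw [tendsto_iff_dist_tendsto_zero]
  exact squeeze_zero (fun _ => dist_nonneg) hdist hlim

/-- if `sup_{A∈Σ} ‖∫ f h_A dm − ∫ f h_A dm_η‖ → 0` along the net, then
`‖f‖_{L¹(m_η)} → ‖f‖_{L¹(m)}` for every `f ∈ L¹(m)`. -/
theorem stmt4 {Ω X : Type*} [MeasurableSpace Ω] [NormedAddCommGroup X] [NormedSpace ℝ X]
    [CompleteSpace X]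
    {Λ : Type*} [SemilatticeSup Λ] [Nonempty Λ]
    (m : VectorMeasure Ω X) (mη : Λ → VectorMeasure Ω X)
    -- `L¹(m) ⊆ L¹(m_η)` for each `η`:
    (hincl : ∀ g : Ω → ℝ, MemL1 m g → ∀ η : Λ, MemL1 (mη η) g)
    (f : Ω → ℝ) (hf : MemL1 m f)
    -- `I A = ∫ f h_A dm`, `J η A = ∫ f h_A dm_η`:
    (I : Set Ω → X) (J : Λ → Set Ω → X)
    (hI : ∀ A : Set Ω, MeasurableSet A → ∀ x : X →L[ℝ] ℝ,
      x (I A) = sint (scal m x) (fun ω => f ω * hS A ω))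
    (hJ : ∀ η : Λ, ∀ A : Set Ω, MeasurableSet A → ∀ x : X →L[ℝ] ℝ,
      x (J η A) = sint (scal (mη η) x) (fun ω => f ω * hS A ω))
    -- hypothesis (i):
    (hlim : Tendsto (fun η : Λ => ⨆ A : {A : Set Ω // MeasurableSet A}, ‖I A.1 - J η A.1‖)
      atTop (nhds 0)) :
    Tendsto (fun η : Λ => l1norm (mη η) f) atTop (nhds (l1norm m f)) :=
  stmt4_general m mη hincl f hf I J hI hJ hlim
end

section
/- Let X be a Banach space with a normalized monotone Schauder basis, let P_n denote the basis projections (so ‖P_n‖ ≤ 1 and P_n x → x for all x), let m : Σ → X be a countably additive vector measure and m_n := P_n ∘ m. Then for every f ∈ L¹(m), f ∈ L¹(m_n) for all n and lim_n ‖f‖_{L¹(m_n)} = ‖f‖_{L¹(m)}. -/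
open MeasureTheory Filter

/-- Composition of a vector measure with a continuous linear map. -/
noncomputable def compVM {Ω X Y : Type*} [MeasurableSpace Ω] [NormedAddCommGroup X]
    [NormedSpace ℝ X] [NormedAddCommGroup Y] [NormedSpace ℝ Y]
    (T : X →L[ℝ] Y) (m : VectorMeasure Ω X) : VectorMeasure Ω Y :=
  m.mapRange T.toLinearMap.toAddMonoidHom T.continuous

/-!
Write `‖f‖_y := ∫ |f| d|y ∘ m|`, so that `l1norm m f` is the supremum of `‖f‖_y` over `‖y‖ ≤ 1`.
The scalarizations of `m_n` are those of `m` along `y ∘ P_n`, again of norm `≤ 1`, which gives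
`‖f‖_{L¹(m_n)} ≤ ‖f‖_{L¹(m)}`. Conversely, a Hahn decomposition of `y ∘ m` and an approximation
of `|f|` from below by simple functions give a simple `g` with `|g| ≤ |f|` and `y (∫ g dm)`
close to `‖f‖_y`. Since `∫ g dm` is a finite sum in `X`, `y (P_n ∫ g dm) → y (∫ g dm)`, while
`y (P_n ∫ g dm) = ∫ g d(y ∘ m_n) ≤ ‖f‖_{L¹(m_n)}`.
Both inequalities need the supremum to be finite (a real `⨆` of an unbounded family is `0`):
by the uniform boundedness principle, `‖f‖_y ≤ C ‖y‖`.
-/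

lemma abs_hS_mul {Ω : Type*} (P : Set Ω) (ω : Ω) (x : ℝ) : |hS P ω * x| = |x| := by
  by_cases hω : ω ∈ P <;> simp [hS, hω]

lemma measurable_hS {Ω : Type*} [MeasurableSpace Ω] {P : Set Ω} (hP : MeasurableSet P) :
    Measurable (hS P) :=
  Measurable.ite hP measurable_const measurable_const

namespace MeasureTheory.SignedMeasure

variable {Ω : Type*} [MeasurableSpace Ω] (s t : SignedMeasure Ω) {g : Ω → ℝ}

lemma integrable_totalVariation_iff :
    Integrable g s.totalVariation ↔
      Integrable g s.toJordanDecomposition.posPart ∧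
        Integrable g s.toJordanDecomposition.negPart :=
  integrable_add_measure

lemma integral_totalVariation (hg : Integrable g s.totalVariation) :
    ∫ ω, g ω ∂s.totalVariation = ∫ ω, g ω ∂s.toJordanDecomposition.posPart
      + ∫ ω, g ω ∂s.toJordanDecomposition.negPart := by
  obtain ⟨hpos, hneg⟩ := (integrable_totalVariation_iff s).1 hg
  exact integral_add_measure hpos hneg

lemma posPart_add_negPart_add_negPart_eq :
    (s + t).toJordanDecomposition.posPart
        + (s.toJordanDecomposition.negPart + t.toJordanDecomposition.negPart)
      = (s + t).toJordanDecomposition.negPart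
        + (s.toJordanDecomposition.posPart + t.toJordanDecomposition.posPart) := by
  refine Measure.ext fun A hA => ?_
  rw [← ENNReal.toReal_eq_toReal_iff' (by finiteness) (by finiteness)]
  simp only [← measureReal_def]
  rw [measureReal_add_apply, measureReal_add_apply, measureReal_add_apply, measureReal_add_apply]
  have hs := s.apply_eq_posPart_real_sub_negPart_real hA
  have ht := t.apply_eq_posPart_real_sub_negPart_real hA
  have hst := (s + t).apply_eq_posPart_real_sub_negPart_real hA
  rw [add_apply] at hst
  linarith

lemma real_totalVariation_univ_le {M : ℝ} (h : ∀ A, |s A| ≤ M) :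
    s.totalVariation.real Set.univ ≤ 2 * M := by
  obtain ⟨u, hu, hpos, hneg⟩ := s.toJordanDecomposition.mutuallySingular
  have hpos' : s.toJordanDecomposition.posPart.real u = 0 := by simp [measureReal_def, hpos]
  have hneg' : s.toJordanDecomposition.negPart.real uᶜ = 0 := by simp [measureReal_def, hneg]
  have hsu := s.apply_eq_posPart_real_sub_negPart_real hu
  have hsuc := s.apply_eq_posPart_real_sub_negPart_real hu.compl
  rw [totalVariation, measureReal_add_apply,
    ← measureReal_add_measureReal_compl (μ := s.toJordanDecomposition.posPart) hu,
    ← measureReal_add_measureReal_compl (μ := s.toJordanDecomposition.negPart) hu]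
  linarith [(abs_le.1 (h u)).1, (abs_le.1 (h uᶜ)).2]

lemma abs_apply_le_real_totalVariation_univ (A : Set Ω) :
    |s A| ≤ s.totalVariation.real Set.univ := by
  by_cases hA : MeasurableSet A
  · rw [s.apply_eq_posPart_real_sub_negPart_real hA, totalVariation, measureReal_add_apply,
      abs_sub_le_iff]
    have := measureReal_mono (μ := s.toJordanDecomposition.posPart) (Set.subset_univ A)
    have := measureReal_mono (μ := s.toJordanDecomposition.negPart) (Set.subset_univ A)
    constructor <;> linarith [measureReal_nonneg (μ := s.toJordanDecomposition.posPart) (s := A),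
      measureReal_nonneg (μ := s.toJordanDecomposition.negPart) (s := A)]
  · simp [VectorMeasure.not_measurable s hA]

end MeasureTheory.SignedMeasure

lemma integral_abs_le_of_forall_integral_min_le {Ω : Type*} [MeasurableSpace Ω]
    {μ : Measure Ω} {f : Ω → ℝ} (hf : Integrable f μ) {B : ℝ}
    (h : ∀ k : ℕ, ∫ ω, min |f ω| k ∂μ ≤ B) :
    ∫ ω, |f ω| ∂μ ≤ B := by
  refine le_of_tendsto' (tendsto_integral_of_dominated_convergence (fun ω => |f ω|)
    (fun k => hf.aestronglyMeasurable.norm.inf aestronglyMeasurable_const) hf.abs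
    (fun k => .of_forall fun ω => ?_) (.of_forall fun ω => ?_)) h
  · rw [Real.norm_eq_abs, abs_of_nonneg (le_min (abs_nonneg _) (Nat.cast_nonneg k))]
    exact min_le_left _ _
  · exact tendsto_const_nhds.congr' <| (eventually_ge_atTop ⌈|f ω|⌉₊).mono fun k hk =>
      (min_eq_left (Nat.ceil_le.1 hk)).symm

section ScalarIntegral

variable {Ω : Type*} [MeasurableSpace Ω] (s t : SignedMeasure Ω) {f g : Ω → ℝ}

open SignedMeasure

lemma abs_sint_le (hg : Integrable g s.totalVariation) :
    |sint s g| ≤ ∫ ω, |g ω| ∂s.totalVariation := by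
  rw [integral_totalVariation s hg.abs, sint]
  refine (abs_sub _ _).trans (add_le_add ?_ ?_) <;>
    exact abs_integral_le_integral_abs

lemma sint_le_integral_abs (hf : Integrable f s.totalVariation)
    (hg : Integrable g s.totalVariation) (hgf : ∀ ω, |g ω| ≤ |f ω|) :
    sint s g ≤ ∫ ω, |f ω| ∂s.totalVariation :=
  (le_abs_self _).trans <| (abs_sint_le s hg).trans <| integral_mono hg.abs hf.abs hgf

lemma sint_add_measure (hs : Integrable g s.totalVariation) (ht : Integrable g t.totalVariation)
    (hst : Integrable g (s + t).totalVariation) :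
    sint (s + t) g = sint s g + sint t g := by
  obtain ⟨hs₁, hs₂⟩ := (integrable_totalVariation_iff s).1 hs
  obtain ⟨ht₁, ht₂⟩ := (integrable_totalVariation_iff t).1 ht
  obtain ⟨hst₁, hst₂⟩ := (integrable_totalVariation_iff (s + t)).1 hst
  have key := congrArg (fun μ => ∫ ω, g ω ∂μ) (posPart_add_negPart_add_negPart_eq s t)
  rw [integral_add_measure hst₁ (hs₂.add_measure ht₂), integral_add_measure hs₂ ht₂,
    integral_add_measure hst₂ (hs₁.add_measure ht₁), integral_add_measure hs₁ ht₁] at key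
  simp only [sint]
  linarith

/-- `P` is the positive set of a Hahn decomposition of `s`. -/
lemma exists_integral_totalVariation_eq_sint :
    ∃ P, MeasurableSet P ∧ ∀ g : Ω → ℝ, Integrable g s.totalVariation →
      ∫ ω, g ω ∂s.totalVariation = sint s (fun ω => hS P ω * g ω) := by
  obtain ⟨u, hu, hpos, hneg⟩ := s.toJordanDecomposition.mutuallySingular
  refine ⟨uᶜ, hu.compl, fun g hg => ?_⟩
  have hpos_ae : ∀ᵐ ω ∂s.toJordanDecomposition.posPart, hS uᶜ ω * g ω = g ω :=
    (measure_eq_zero_iff_ae_notMem.1 hpos).mono fun ω hω => by simp [hS, hω]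
  have hneg_ae : ∀ᵐ ω ∂s.toJordanDecomposition.negPart, hS uᶜ ω * g ω = -g ω :=
    (measure_eq_zero_iff_ae_notMem.1 hneg).mono fun ω hω => by simp_all [hS]
  rw [sint, integral_congr_ae hpos_ae, integral_congr_ae hneg_ae, integral_neg,
    integral_totalVariation s hg, sub_neg_eq_add]

lemma sint_simpleFunc (g : SimpleFunc Ω ℝ) :
    sint s g = ∑ c ∈ g.range, c * s (g ⁻¹' {c}) := by
  rw [sint, SimpleFunc.integral_eq_sum g (SimpleFunc.integrable_of_isFiniteMeasure _),
    SimpleFunc.integral_eq_sum g (SimpleFunc.integrable_of_isFiniteMeasure _),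
    ← Finset.sum_sub_distrib]
  refine Finset.sum_congr rfl fun c _ => ?_
  rw [s.apply_eq_posPart_real_sub_negPart_real (g.measurableSet_preimage _), smul_eq_mul,
    smul_eq_mul]
  ring

lemma exists_simpleFunc_lt_sint (hf : Integrable f s.totalVariation) {a : ℝ}
    (ha : a < ∫ ω, |f ω| ∂s.totalVariation) :
    ∃ g : SimpleFunc Ω ℝ, (∀ ω, |g ω| ≤ |f ω|) ∧ a < sint s g := by
  obtain ha₀ | ha₀ := lt_or_ge a 0
  · exact ⟨0, by simp, by simpa [sint] using ha₀⟩
  obtain ⟨P, hP, hsint⟩ := exists_integral_totalVariation_eq_sint s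
  have hL : ENNReal.ofReal a < ∫⁻ ω, ‖f ω‖₊ ∂s.totalVariation := by
    simp_rw [← enorm_eq_nnnorm, ← ofReal_integral_norm_eq_lintegral_enorm hf]
    exact (ENNReal.ofReal_lt_ofReal_iff_of_nonneg ha₀).2 ha
  obtain ⟨φ, hφf, -, hφ⟩ := exists_lt_lintegral_simpleFunc_of_lt_lintegral hL
  let h : SimpleFunc Ω ℝ := φ.map (↑)
  have hh : Integrable h s.totalVariation := SimpleFunc.integrable_of_isFiniteMeasure h
  let g : SimpleFunc Ω ℝ := SimpleFunc.piecewise P hP (.const Ω 1) (.const Ω (-1)) * h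
  have hg : ⇑g = fun ω => hS P ω * h ω := by
    ext ω
    by_cases hω : ω ∈ P <;> simp [g, hS, hω]
  refine ⟨g, fun ω => ?_, ?_⟩
  · rw [hg, abs_hS_mul]
    simpa [h] using NNReal.coe_le_coe.2 (hφf ω)
  · rw [hg, ← hsint h hh]
    rw [lintegral_coe_eq_integral _ hh] at hφ
    exact ((ENNReal.ofReal_lt_ofReal_iff'.1 hφ).1)

end ScalarIntegral

section VectorMeasure

variable {Ω X Y : Type*} [MeasurableSpace Ω] [NormedAddCommGroup X] [NormedSpace ℝ X]
  [NormedAddCommGroup Y] [NormedSpace ℝ Y] (m : VectorMeasure Ω X) {f : Ω → ℝ}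

lemma scal_apply (y : X →L[ℝ] ℝ) (A : Set Ω) : scal m y A = y (m A) :=
  VectorMeasure.mapRange_apply _ y.continuous

lemma compVM_apply (T : X →L[ℝ] Y) (A : Set Ω) : compVM T m A = T (m A) :=
  VectorMeasure.mapRange_apply _ T.continuous

lemma scal_compVM (T : X →L[ℝ] Y) (y : Y →L[ℝ] ℝ) :
    scal (compVM T m) y = scal m (y.comp T) := by
  ext A _
  rw [scal_apply, scal_apply, compVM_apply, ContinuousLinearMap.comp_apply]

lemma scal_add (y z : X →L[ℝ] ℝ) : scal m (y + z) = scal m y + scal m z := by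
  ext A _
  rw [add_apply, scal_apply, scal_apply, scal_apply, add_apply]

lemma MemL1.compVM (hf : MemL1 m f) (T : X →L[ℝ] Y) : MemL1 (compVM T m) f := fun y => by
  rw [scal_compVM]
  exact hf _

lemma MeasureTheory.VectorMeasure.exists_forall_norm_apply_le : ∃ M, ∀ A, ‖m A‖ ≤ M := by
  obtain ⟨M, hM⟩ := banach_steinhaus (g := fun A => NormedSpace.inclusionInDoubleDual ℝ X (m A))
    fun y => ⟨(scal m y).totalVariation.real Set.univ, fun A => by
      rw [NormedSpace.dual_def, ← scal_apply, Real.norm_eq_abs]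
      exact (scal m y).abs_apply_le_real_totalVariation_univ A⟩
  exact ⟨M, fun A => (NormedSpace.inclusionInDoubleDualLi ℝ).norm_map (m A) ▸ hM A⟩

lemma exists_real_totalVariation_scal_le :
    ∃ M, ∀ y, (scal m y).totalVariation.real Set.univ ≤ M * ‖y‖ := by
  obtain ⟨M, hM⟩ := m.exists_forall_norm_apply_le
  refine ⟨2 * M, fun y => ?_⟩
  rw [mul_assoc, mul_comm M]
  refine (scal m y).real_totalVariation_univ_le fun A => ?_
  rw [scal_apply, ← Real.norm_eq_abs]
  exact (y.le_opNorm _).trans (mul_le_mul_of_nonneg_left (hM A) (norm_nonneg y))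

noncomputable def simpleIntegral (g : SimpleFunc Ω ℝ) : X :=
  ∑ c ∈ g.range, c • m (g ⁻¹' {c})

lemma sint_scal_simpleFunc (y : X →L[ℝ] ℝ) (g : SimpleFunc Ω ℝ) :
    sint (scal m y) g = y (simpleIntegral m g) := by
  simp only [sint_simpleFunc, simpleIntegral, map_sum, map_smul, scal_apply, smul_eq_mul]

lemma simpleIntegral_compVM (T : X →L[ℝ] Y) (g : SimpleFunc Ω ℝ) :
    simpleIntegral (compVM T m) g = T (simpleIntegral m g) := by
  simp only [simpleIntegral, map_sum, map_smul, compVM_apply]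

end VectorMeasure

section Bound

variable {Ω X : Type*} [MeasurableSpace Ω] [NormedAddCommGroup X] [NormedSpace ℝ X]
  (m : VectorMeasure Ω X) {f : Ω → ℝ}

lemma exists_continuousLinearMap_eq_sint_scal {M : ℝ}
    (hM : ∀ y, (scal m y).totalVariation.real Set.univ ≤ M * ‖y‖) {g : Ω → ℝ}
    (hg : ∀ y, AEStronglyMeasurable g (scal m y).totalVariation) {k : ℝ}
    (hk : ∀ ω, |g ω| ≤ k) :
    ∃ T : (X →L[ℝ] ℝ) →L[ℝ] ℝ, ∀ y, T y = sint (scal m y) g := by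
  have hint y : Integrable g (scal m y).totalVariation :=
    .of_bound (hg y) k (.of_forall fun ω => (Real.norm_eq_abs _).trans_le (hk ω))
  let L : (X →L[ℝ] ℝ) →+ ℝ := AddMonoidHom.mk' (fun y => sint (scal m y) g) fun y z => by
    simp only [scal_add]
    exact sint_add_measure _ _ (hint y) (hint z) (scal_add m y z ▸ hint (y + z))
  refine ⟨L.toRealLinearMap (AddMonoidHomClass.continuous_of_bound L (|k| * M) fun y => ?_),
    fun _ => rfl⟩
  have hgk : ∀ ω, |g ω| ≤ |k| := fun ω => (hk ω).trans (le_abs_self k)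
  calc ‖L y‖ ≤ ∫ ω, |g ω| ∂(scal m y).totalVariation := abs_sint_le _ (hint y)
    _ ≤ ∫ _, |k| ∂(scal m y).totalVariation :=
        integral_mono (hint y).abs (integrable_const _) hgk
    _ = |k| * (scal m y).totalVariation.real Set.univ := by
        rw [integral_const, smul_eq_mul, mul_comm]
    _ ≤ |k| * M * ‖y‖ := by
        rw [mul_assoc]
        exact mul_le_mul_of_nonneg_left (hM y) (abs_nonneg k)

/-- Uniform boundedness applied to the functionals `y ↦ ∫ g d(y ∘ m)` for bounded `|g| ≤ |f|`;
the Hahn decomposition of `y ∘ m` then recovers the truncations of `∫ |f| d|y ∘ m|`. -/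
lemma MemL1.exists_integral_abs_le (hf : MemL1 m f) :
    ∃ C, ∀ y, ∫ ω, |f ω| ∂(scal m y).totalVariation ≤ C * ‖y‖ := by
  obtain ⟨M, hM⟩ := exists_real_totalVariation_scal_le m
  let ι := {g : Ω → ℝ // (∀ y, AEStronglyMeasurable g (scal m y).totalVariation) ∧
    (∃ k, ∀ ω, |g ω| ≤ k) ∧ ∀ ω, |g ω| ≤ |f ω|}
  have hT (g : ι) : ∃ T : (X →L[ℝ] ℝ) →L[ℝ] ℝ, ∀ y, T y = sint (scal m y) g.1 :=
    exists_continuousLinearMap_eq_sint_scal m hM g.2.1 g.2.2.1.choose_spec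
  choose T hT using hT
  have hint (g : ι) y : Integrable g.1 (scal m y).totalVariation :=
    (hf y).abs.mono' (g.2.1 y) (.of_forall g.2.2.2)
  obtain ⟨C, hC⟩ := banach_steinhaus (g := T) fun y =>
    ⟨∫ ω, |f ω| ∂(scal m y).totalVariation, fun g => by
      rw [hT, Real.norm_eq_abs]
      exact (abs_sint_le _ (hint g y)).trans (integral_mono (hint g y).abs (hf y).abs g.2.2.2)⟩
  refine ⟨C, fun y => integral_abs_le_of_forall_integral_min_le (hf y) fun k => ?_⟩
  obtain ⟨P, hP, hsint⟩ := exists_integral_totalVariation_eq_sint (scal m y)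
  have hφ z : AEStronglyMeasurable (fun ω => min |f ω| (k : ℝ)) (scal m z).totalVariation :=
    (hf z).aestronglyMeasurable.norm.inf aestronglyMeasurable_const
  have habs ω : |min |f ω| (k : ℝ)| = min |f ω| (k : ℝ) := abs_of_nonneg (by positivity)
  let g : ι := ⟨fun ω => hS P ω * min |f ω| k,
    fun z => (measurable_hS hP).aestronglyMeasurable.mul (hφ z),
    ⟨k, fun ω => by rw [abs_hS_mul, habs]; exact min_le_right _ _⟩,
    fun ω => by rw [abs_hS_mul, habs]; exact min_le_left _ _⟩
  rw [hsint _ ((hf y).abs.mono' (hφ y) (.of_forall fun ω => by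
    rw [Real.norm_eq_abs, habs]; exact min_le_left _ _)), ← hT g]
  exact (le_abs_self _).trans ((T g).le_opNorm y |>.trans
    (mul_le_mul_of_nonneg_right (hC g) (norm_nonneg y)))

end Bound

section L1Norm

variable {Ω X Y : Type*} [MeasurableSpace Ω] [NormedAddCommGroup X] [NormedSpace ℝ X]
  [NormedAddCommGroup Y] [NormedSpace ℝ Y] (m : VectorMeasure Ω X) {f : Ω → ℝ}

instance : Nonempty {y : X →L[ℝ] ℝ // ‖y‖ ≤ 1} := ⟨⟨0, by simp⟩⟩

lemma MemL1.bddAbove_integral_abs (hf : MemL1 m f) :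
    BddAbove (Set.range fun y : {y : X →L[ℝ] ℝ // ‖y‖ ≤ 1} =>
      ∫ ω, |f ω| ∂(scal m y.1).totalVariation) := by
  obtain ⟨C, hC⟩ := hf.exists_integral_abs_le m
  refine ⟨max C 0, Set.forall_mem_range.2 fun y => (hC y.1).trans ?_⟩
  calc C * ‖y.1‖ ≤ max C 0 * ‖y.1‖ :=
        mul_le_mul_of_nonneg_right (le_max_left _ _) (norm_nonneg _)
    _ ≤ max C 0 := mul_le_of_le_one_right (le_max_right _ _) y.2

lemma MemL1.integral_abs_le_l1norm (hf : MemL1 m f) {y : X →L[ℝ] ℝ} (hy : ‖y‖ ≤ 1) :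
    ∫ ω, |f ω| ∂(scal m y).totalVariation ≤ l1norm m f :=
  le_ciSup (hf.bddAbove_integral_abs m) ⟨y, hy⟩

lemma l1norm_compVM_le (hf : MemL1 m f) {T : X →L[ℝ] Y} (hT : ‖T‖ ≤ 1) :
    l1norm (compVM T m) f ≤ l1norm m f := by
  refine ciSup_le fun y => ?_
  rw [scal_compVM]
  exact hf.integral_abs_le_l1norm m <|
    (y.1.opNorm_comp_le T).trans (mul_le_one₀ y.2 (norm_nonneg T) hT)

lemma MemL1.apply_simpleIntegral_le_l1norm (hf : MemL1 m f) {y : X →L[ℝ] ℝ} (hy : ‖y‖ ≤ 1)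
    {g : SimpleFunc Ω ℝ} (hgf : ∀ ω, |g ω| ≤ |f ω|) :
    y (simpleIntegral m g) ≤ l1norm m f := by
  rw [← sint_scal_simpleFunc]
  exact (sint_le_integral_abs _ (hf y) (SimpleFunc.integrable_of_isFiniteMeasure g) hgf).trans
    (hf.integral_abs_le_l1norm m hy)

lemma MemL1.exists_lt_apply_simpleIntegral (hf : MemL1 m f) {a : ℝ} (ha : a < l1norm m f) :
    ∃ y : X →L[ℝ] ℝ, ‖y‖ ≤ 1 ∧ ∃ g : SimpleFunc Ω ℝ, (∀ ω, |g ω| ≤ |f ω|) ∧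
      a < y (simpleIntegral m g) := by
  obtain ⟨⟨y, hy⟩, hay⟩ := exists_lt_of_lt_ciSup ha
  obtain ⟨g, hgf, hag⟩ := exists_simpleFunc_lt_sint _ (hf y) hay
  exact ⟨y, hy, g, hgf, sint_scal_simpleFunc m y g ▸ hag⟩

end L1Norm

theorem stmt6_general {Ω X : Type*} [MeasurableSpace Ω] [NormedAddCommGroup X] [NormedSpace ℝ X]
    -- basis projections `P n`, with basis constant 1 (monotone) and pointwise convergence:
    (P : ℕ → (X →L[ℝ] X))
    (hmono : ∀ n : ℕ, ‖P n‖ ≤ 1)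
    (hconv : ∀ x : X, Tendsto (fun n : ℕ => P n x) atTop (nhds x))
    (m : VectorMeasure Ω X) :
    ∀ f : Ω → ℝ, MemL1 m f →
      (∀ n : ℕ, MemL1 (compVM (P n) m) f) ∧
      Tendsto (fun n : ℕ => l1norm (compVM (P n) m) f) atTop (nhds (l1norm m f)) := by
  intro f hf
  refine ⟨fun n => hf.compVM m (P n), tendsto_order.2 ⟨fun a ha => ?_, fun a ha =>
    .of_forall fun n => (l1norm_compVM_le m hf (hmono n)).trans_lt ha⟩⟩
  obtain ⟨y, hy, g, hgf, hag⟩ := hf.exists_lt_apply_simpleIntegral m ha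
  have hlim : Tendsto (fun n => y (P n (simpleIntegral m g))) atTop
      (nhds (y (simpleIntegral m g))) := (y.continuous.tendsto _).comp (hconv _)
  filter_upwards [hlim.eventually (eventually_gt_nhds hag)] with n hn
  rw [← simpleIntegral_compVM] at hn
  exact hn.trans_le ((hf.compVM m (P n)).apply_simpleIntegral_le_l1norm _ hy hgf)

/-- if `X` has a normalized monotone Schauder basis with basis projections `P n`
and `m_n := P_n ∘ m`, then every `f ∈ L¹(m)` is in `L¹(m_n)` for all `n` and
`‖f‖_{L¹(m_n)} → ‖f‖_{L¹(m)}`. -/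
theorem stmt6 {Ω X : Type*} [MeasurableSpace Ω] [NormedAddCommGroup X] [NormedSpace ℝ X]
    [CompleteSpace X]
    (e : ℕ → X) (b : ℕ → (X →L[ℝ] ℝ))
    -- biorthogonal functionals of a normalized basis:
    (hbi : ∀ i j : ℕ, b i (e j) = if i = j then 1 else 0)
    (hnorm : ∀ i : ℕ, ‖e i‖ = 1)
    -- basis projections `P n`, with basis constant 1 (monotone) and pointwise convergence:
    (P : ℕ → (X →L[ℝ] X))
    (hP : ∀ n : ℕ, P n = ∑ i ∈ Finset.range n, (b i).smulRight (e i))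
    (hmono : ∀ n : ℕ, ‖P n‖ ≤ 1)
    (hconv : ∀ x : X, Tendsto (fun n : ℕ => P n x) atTop (nhds x))
    (m : VectorMeasure Ω X) :
    ∀ f : Ω → ℝ, MemL1 m f →
      (∀ n : ℕ, MemL1 (compVM (P n) m) f) ∧
      Tendsto (fun n : ℕ => l1norm (compVM (P n) m) f) atTop (nhds (l1norm m f)) :=
  stmt6_general P hmono hconv m
end
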